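/- With g_- and g_0 = ℝx4 ⊕ ℝx5 as above, the first Tanaka prolongation g_1, defined as the space of degree-1 linear maps d : g_- → g_{-1} ⊕ g_0 (i.e., d(g_{-2}) ⊆ g_{-1}, d(g_{-1}) ⊆ g_0) satisfying the derivation property d([y,z]) = [d(y),z] + [y,d(z)] for y,z ∈ g_-, is exactly 2-dimensional, spanned by x6: (x1 ↦ −x2, x2 ↦ −6x5, x3 ↦ 2x4) and x7: (x1 ↦ −x3, x2 ↦ −2x4, x3 ↦ −6x5). -/
import Mathlib


/-- The Heisenberg Lie algebra `g_- = ℝx1 ⊕ ℝx2 ⊕ ℝx3` with `[x2,x3] = 4x1`. -/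
def hBracket (u v : Fin 3 → ℝ) : Fin 3 → ℝ :=
  ![4 * (u 1 * v 2 - u 2 * v 1), 0, 0]

/-- `x4 : x1 ↦ −2x1, x2 ↦ −x2, x3 ↦ −x3`, a basis vector of `g_0`. -/
noncomputable def X4 : (Fin 3 → ℝ) →ₗ[ℝ] (Fin 3 → ℝ) :=
  Matrix.toLin' !![(-2 : ℝ), 0, 0; 0, -1, 0; 0, 0, -1]

/-- `x5 : x1 ↦ 0, x2 ↦ −x3, x3 ↦ x2`, a basis vector of `g_0`. -/
noncomputable def X5 : (Fin 3 → ℝ) →ₗ[ℝ] (Fin 3 → ℝ) :=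
  Matrix.toLin' !![(0 : ℝ), 0, 0; 0, 0, 1; 0, -1, 0]

/-- `x6 : x1 ↦ −x2, x2 ↦ −6x5, x3 ↦ 2x4`, as a degree-one map
`g_- → g_{-1} ⊕ g_0` (the first factor of the pair is the `g_-`-part of the value,
the second factor is the `g_0`-part, realized as an endomorphism of `g_-`). -/
noncomputable def X6 : (Fin 3 → ℝ) →ₗ[ℝ] ((Fin 3 → ℝ) × ((Fin 3 → ℝ) →ₗ[ℝ] (Fin 3 → ℝ))) :=
  LinearMap.prod (Matrix.toLin' !![(0 : ℝ), 0, 0; -1, 0, 0; 0, 0, 0])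
    (((LinearMap.proj 1 : (Fin 3 → ℝ) →ₗ[ℝ] ℝ).smulRight ((-6 : ℝ) • X5)) +
      ((LinearMap.proj 2 : (Fin 3 → ℝ) →ₗ[ℝ] ℝ).smulRight ((2 : ℝ) • X4)))

/-- `x7 : x1 ↦ −x3, x2 ↦ −2x4, x3 ↦ −6x5`, as a degree-one map `g_- → g_{-1} ⊕ g_0`. -/
noncomputable def X7 : (Fin 3 → ℝ) →ₗ[ℝ] ((Fin 3 → ℝ) × ((Fin 3 → ℝ) →ₗ[ℝ] (Fin 3 → ℝ))) :=
  LinearMap.prod (Matrix.toLin' !![(0 : ℝ), 0, 0; 0, 0, 0; -1, 0, 0])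
    (((LinearMap.proj 1 : (Fin 3 → ℝ) →ₗ[ℝ] ℝ).smulRight ((-2 : ℝ) • X4)) +
      ((LinearMap.proj 2 : (Fin 3 → ℝ) →ₗ[ℝ] ℝ).smulRight ((-6 : ℝ) • X5)))

lemma X4_apply (v : Fin 3 → ℝ) : X4 v = ![-2 * v 0, -v 1, -v 2] := by
  funext i; fin_cases i <;>
    simp [X4, Matrix.toLin'_apply, Matrix.mulVec, dotProduct, Fin.sum_univ_three]

lemma X5_apply (v : Fin 3 → ℝ) : X5 v = ![0, v 2, -v 1] := by
  funext i; fin_cases i <;>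
    simp [X5, Matrix.toLin'_apply, Matrix.mulVec, dotProduct, Fin.sum_univ_three]

lemma X6_apply (v : Fin 3 → ℝ) :
    X6 v = (![0, -v 0, 0], v 1 • ((-6 : ℝ) • X5) + v 2 • ((2 : ℝ) • X4)) := by
  refine Prod.ext ?_ ?_
  · funext i; fin_cases i <;>
      simp [X6, Matrix.toLin'_apply, Matrix.mulVec, dotProduct, Fin.sum_univ_three]
  · simp [X6]

lemma X7_apply (v : Fin 3 → ℝ) :
    X7 v = (![0, 0, -v 0], v 1 • ((-2 : ℝ) • X4) + v 2 • ((-6 : ℝ) • X5)) := by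
  refine Prod.ext ?_ ?_
  · funext i; fin_cases i <;>
      simp [X7, Matrix.toLin'_apply, Matrix.mulVec, dotProduct, Fin.sum_univ_three]
  · simp [X7]

lemma comb_apply (a b : ℝ) (v : Fin 3 → ℝ) :
    (a • X6 + b • X7) v =
      (![0, -a * v 0, -b * v 0],
        (2 * a * v 2 - 2 * b * v 1) • X4 + (-6 * a * v 1 - 6 * b * v 2) • X5) := by
  simp only [LinearMap.add_apply, LinearMap.smul_apply, X6_apply, X7_apply, Prod.smul_mk,
    Prod.mk_add_mk]
  refine Prod.ext ?_ ?_
  · funext i; fin_cases i <;> simp <;> ring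
  · simp only [smul_smul]
    module

lemma decomp (v : Fin 3 → ℝ) :
    v = v 0 • ![(1:ℝ),0,0] + v 1 • ![(0:ℝ),1,0] + v 2 • ![(0:ℝ),0,1] := by
  funext i; fin_cases i <;> simp


/-- The first Tanaka prolongation `g_1` of the Heisenberg algebra,
i.e. the space of degree-one maps `d : g_- → g_{-1} ⊕ g_0` (so `d(g_{-2}) ⊆ g_{-1}`,
`d(g_{-1}) ⊆ g_0`) satisfying the derivation property
`d([y,z]) = [d(y),z] + [y,d(z)]`, is exactly 2-dimensional, spanned by `x6` and `x7`. -/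
theorem tanaka_g1 :
    (∀ D : (Fin 3 → ℝ) →ₗ[ℝ] ((Fin 3 → ℝ) × ((Fin 3 → ℝ) →ₗ[ℝ] (Fin 3 → ℝ))),
      ((∀ v : Fin 3 → ℝ, v 1 = 0 ∧ v 2 = 0 → (D v).2 = 0 ∧ (D v).1 0 = 0) ∧
       (∀ v : Fin 3 → ℝ, v 0 = 0 → (D v).1 = 0 ∧ ∃ a b : ℝ, (D v).2 = a • X4 + b • X5) ∧
       (∀ y z : Fin 3 → ℝ,
         (D (hBracket y z)).1 =
           hBracket ((D y).1) z + (D y).2 z + hBracket y ((D z).1) - (D z).2 y ∧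
         (D (hBracket y z)).2 = 0))
      ↔ ∃ a b : ℝ, D = a • X6 + b • X7) ∧
    (∀ a b : ℝ, a • X6 + b • X7 = 0 → a = 0 ∧ b = 0) := by
  constructor
  · intro D
    constructor
    · rintro ⟨h1, h2, h3⟩
      set e0 : Fin 3 → ℝ := ![1,0,0] with he0
      set e1 : Fin 3 → ℝ := ![0,1,0] with he1
      set e2 : Fin 3 → ℝ := ![0,0,1] with he2
      obtain ⟨hz2, hz0⟩ := h1 e0 ⟨by simp [he0], by simp [he0]⟩
      obtain ⟨hD11, a1, b1, hD12⟩ := h2 e1 (by simp [he1])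
      obtain ⟨hD21, a2, b2, hD22⟩ := h2 e2 (by simp [he2])
      set p : ℝ := (D e0).1 1 with hp
      set q : ℝ := (D e0).1 2 with hq
      -- hBracket e0 e1 = 0
      have hb01 : hBracket e0 e1 = 0 := by funext i; fin_cases i <;> simp [hBracket, he0, he1]
      have hb02 : hBracket e0 e2 = 0 := by funext i; fin_cases i <;> simp [hBracket, he0, he2]
      have hb12 : hBracket e1 e2 = (4 : ℝ) • e0 := by
        funext i; fin_cases i <;> simp [hBracket, he0, he1, he2]
      -- equation from (e0, e1) at coordinate 0
      have E1 : a1 = 2 * q := by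
        have h := congrFun (h3 e0 e1).1 0
        rw [hb01] at h
        simp only [map_zero, hD11, hD12, hz2] at h
        simp only [LinearMap.add_apply, LinearMap.smul_apply, X4_apply, X5_apply,
          Pi.add_apply, Pi.sub_apply, Pi.smul_apply, Pi.zero_apply, hBracket,
          he0, he1, he2] at h
        simp at h
        -- h should be a linear relation
        linarith [h]
      have E2 : a2 = -2 * p := by
        have h := congrFun (h3 e0 e2).1 0
        rw [hb02] at h
        simp only [map_zero, hD21, hD22, hz2] at h
        simp only [LinearMap.add_apply, LinearMap.smul_apply, X4_apply, X5_apply,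
          Pi.add_apply, Pi.sub_apply, Pi.smul_apply, Pi.zero_apply, hBracket,
          he0, he1, he2] at h
        simp at h
        linarith [h]
      have E3 : b1 = 6 * p := by
        have h := congrFun (h3 e1 e2).1 1
        rw [hb12, map_smul] at h
        simp only [hD11, hD21, hD12, hD22] at h
        simp only [LinearMap.add_apply, LinearMap.smul_apply, X4_apply, X5_apply,
          Pi.add_apply, Pi.sub_apply, Pi.smul_apply, hBracket, he0, he1, he2, ← hp] at h
        simp [← hp] at h
        linarith [h]
      have E4 : b2 = 6 * q := by
        have h := congrFun (h3 e1 e2).1 2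
        rw [hb12, map_smul] at h
        simp only [hD11, hD21, hD12, hD22] at h
        simp only [LinearMap.add_apply, LinearMap.smul_apply, X4_apply, X5_apply,
          Pi.add_apply, Pi.sub_apply, Pi.smul_apply, hBracket, he0, he1, he2, ← hq] at h
        simp [← hq] at h
        linarith [h]
      refine ⟨-p, -q, ?_⟩
      apply LinearMap.ext; intro v
      rw [show v = v 0 • e0 + v 1 • e1 + v 2 • e2 from decomp v]
      simp only [map_add, map_smul, comb_apply]
      have hDe0 : D e0 = (![0, p, q], 0) := by
        refine Prod.ext ?_ hz2
        funext i; fin_cases i <;> simp [hz0, hp, hq]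
      have hDe1 : D e1 = (0, (2*q) • X4 + (6*p) • X5) := by
        refine Prod.ext hD11 ?_
        rw [hD12, E1, E3]
      have hDe2 : D e2 = (0, (-2*p) • X4 + (6*q) • X5) := by
        refine Prod.ext hD21 ?_
        rw [hD22, E2, E4]
      rw [hDe0, hDe1, hDe2]
      refine Prod.ext ?_ ?_
      · simp only [Prod.smul_mk, Prod.mk_add_mk, Prod.fst]
        funext i; fin_cases i <;> simp [he0, he1, he2] <;> ring
      · simp only [Prod.smul_mk, Prod.mk_add_mk, Prod.snd]
        simp only [he0, he1, he2]
        simp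
    · rintro ⟨a, b, rfl⟩
      refine ⟨?_, ?_, ?_⟩
      · intro v ⟨hv1, hv2⟩
        rw [comb_apply]
        constructor
        · simp [hv1, hv2]
        · simp
      · intro v hv0
        rw [comb_apply]
        refine ⟨?_, 2 * a * v 2 - 2 * b * v 1, -6 * a * v 1 - 6 * b * v 2, rfl⟩
        funext i; fin_cases i <;> simp [hv0]
      · intro y z
        have hb1 : (hBracket y z) 1 = 0 := by simp [hBracket]
        have hb2 : (hBracket y z) 2 = 0 := by simp [hBracket]
        constructor
        · rw [comb_apply, comb_apply, comb_apply]
          funext i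
          fin_cases i <;>
            simp [hBracket, X4_apply, X5_apply, LinearMap.add_apply, LinearMap.smul_apply,
              Matrix.smul_cons, Matrix.smul_empty] <;> ring
        · rw [comb_apply]
          simp only [hb1, hb2]
          simp [hBracket]
  · intro a b hab
    have h := congrFun (congrArg Prod.fst (LinearMap.congr_fun hab ![1,0,0]))
    have h1 := h 1
    have h2 := h 2
    rw [comb_apply] at h1 h2
    simp at h1 h2
    exact ⟨h1, h2⟩
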